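/- arXiv:math/0210273 — 5 statements merged into one kernel-verified Lean document; each statement's English description precedes it below -/
import Mathlib

section
/- Let R be a commutative ring containing ℚ, let a ∈ R, and let n be a strictly positive integer. Then the polynomial (t^{2n+1} - a^{2n+1})/(t - a) = t^{2n} + a t^{2n-1} + ⋯ + a^{2n} in R[t] is the square of a polynomial in R[t] if and only if a^{n+1} = 0. -/
/-!
If `a ^ (n+1) = 0`, the polynomial is the degree-`2n` homogenisation of
`(1 - a x)⁻¹ = ∑_{i ≤ 2n} (a x) ^ i`, so the homogenised truncation of the binomial series of
`(1 - a x) ^ (-1/2)` is a square root of it.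

Conversely, over a field of characteristic zero `t ^ (2n+1) - c ^ (2n+1)` is squarefree unless
`c = 0`, so in every residue field `a` vanishes and a square root `q` becomes `± t ^ n`.
Hence `a` is nilpotent and `q ≡ w t ^ n` modulo nilpotents with `w ^ 2 ≡ 1`; replacing `q` by
`σ q`, where `σ = w (w ^ 2) ^ (-1/2)` is a square root of `1`, we may take `w = 1`. If moreover
`a ^ (n+2) = 0`, the degree-`(n+1)` homogenised truncation `r ≡ t ^ (n+1)` of `(1 - a x) ^ (-1/2)`
satisfies `r ^ 2 = t ^ 2 q ^ 2`; as `r + t q ≡ 2 t ^ (n+1)` is a non-zero-divisor, `r = t q`, and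
comparing constant terms gives `choose (-1/2) (n+1) • a ^ (n+1) = 0`. In general this applies
modulo `a ^ (n+2)`, and `a ^ (n+1) ∈ (a ^ (n+2))` with `a` nilpotent forces `a ^ (n+1) = 0`.
-/

open Polynomial

lemma Polynomial.coeff_aeval_C_mul_X {S R : Type*} [CommRing S] [CommRing R] [Algebra S R]
    (p : S[X]) (c : R) (i : ℕ) :
    (aeval (C c * X) p).coeff i = algebraMap S R (p.coeff i) * c ^ i := by
  have h : aeval (C c * X) p = (p.map (algebraMap S R)).comp (C c * X) := by
    rw [comp, eval₂_map, aeval_def]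
    rfl
  rw [h, comp_C_mul_X_coeff, coeff_map]

lemma Polynomial.reflect_sum {R ι : Type*} [Semiring R] (N : ℕ) (s : Finset ι)
    (f : ι → R[X]) :
    reflect N (∑ i ∈ s, f i) = ∑ i ∈ s, reflect N (f i) :=
  map_sum (⟨⟨reflect N, reflect_zero⟩, fun f g => reflect_add f g N⟩ : R[X] →+ R[X]) f s

lemma Polynomial.isNilpotent_reflect {R : Type*} [CommRing R] {p : R[X]} (hp : IsNilpotent p)
    (N : ℕ) : IsNilpotent (reflect N p) :=
  Polynomial.isNilpotent_iff.mpr fun i => by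
    rw [coeff_reflect]; exact Polynomial.isNilpotent_iff.mp hp _

lemma add_mem_nonZeroDivisors_of_isNilpotent {R : Type*} [CommRing R] {x ν : R}
    (hx : x ∈ nonZeroDivisors R) (hν : IsNilpotent ν) : x + ν ∈ nonZeroDivisors R := by
  obtain ⟨t, ht⟩ := hν
  -- `x + ν` divides `x ^ t - (-ν) ^ t = x ^ t`, a non-zero-divisor.
  obtain ⟨g, hg⟩ := sub_dvd_pow_sub_pow x (-ν) t
  rw [sub_neg_eq_add, neg_pow, ht, mul_zero, sub_zero] at hg
  exact (mul_mem_nonZeroDivisors.mp (hg ▸ pow_mem hx t)).1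

lemma pow_eq_zero_of_mem_span_pow_succ {R : Type*} [CommRing R] {a : R} (ha : IsNilpotent a)
    {k : ℕ} (h : a ^ k ∈ Ideal.span {a ^ (k + 1)}) : a ^ k = 0 := by
  obtain ⟨y, hy⟩ := Ideal.mem_span_singleton'.mp h
  have hunit : IsUnit (1 - y * a) :=
    (Commute.isNilpotent_mul_left (Commute.all _ _) ha).isUnit_one_sub
  exact hunit.mul_right_eq_zero.mp (by linear_combination -hy)

section ResidueField

variable {R : Type*} [CommRing R]

lemma isNilpotent_of_forall_residueField {x : R}
    (h : ∀ (p : Ideal R) [p.IsPrime], algebraMap R p.ResidueField x = 0) : IsNilpotent x :=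
  nilpotent_iff_mem_prime.mpr fun p _ => Ideal.algebraMap_residueField_eq_zero.mp (h p)

lemma Polynomial.isNilpotent_of_forall_map_residueField {f : R[X]}
    (h : ∀ (p : Ideal R) [p.IsPrime], f.map (algebraMap R p.ResidueField) = 0) : IsNilpotent f :=
  Polynomial.isNilpotent_iff.mpr fun i =>
    isNilpotent_of_forall_residueField fun p _ => by rw [← coeff_map, h p, coeff_zero]

end ResidueField

noncomputable def invSqrtPoly (N : ℕ) : ℚ[X] :=
  PowerSeries.trunc N (PowerSeries.binomialSeries ℚ (-2⁻¹ : ℚ))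

lemma PowerSeries.binomialSeries_neg_half_sq_mul :
    binomialSeries ℚ (-2⁻¹ : ℚ) ^ 2 * (1 + X) = 1 := by
  have h := binomialSeries_nat (A := ℚ) (R := ℚ) 1
  rw [Nat.cast_one, pow_one] at h
  rw [← h, sq, ← binomialSeries_add, ← binomialSeries_add]
  norm_num

lemma X_pow_dvd_invSqrtPoly_sq_mul_sub_one (N : ℕ) :
    X ^ N ∣ invSqrtPoly N ^ 2 * (1 + X) - 1 := by
  have h : PowerSeries.trunc N ((invSqrtPoly N : PowerSeries ℚ) ^ 2 * (1 + PowerSeries.X)) =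
      PowerSeries.trunc N 1 := by
    rw [← PowerSeries.trunc_trunc_mul, invSqrtPoly, PowerSeries.trunc_trunc_pow,
      PowerSeries.trunc_trunc_mul, PowerSeries.binomialSeries_neg_half_sq_mul]
  refine X_pow_dvd_iff.mpr fun d hd => ?_
  have hcoeff := congrArg (coeff · d) h
  simp only [PowerSeries.coeff_trunc, hd, if_true] at hcoeff
  rw [coeff_sub, ← coeff_coe, ← coeff_coe, sub_eq_zero]
  push_cast
  exact hcoeff

lemma invSqrtPoly_coeff {N i : ℕ} (h : i < N) :
    (invSqrtPoly N).coeff i = Ring.choose (-2⁻¹ : ℚ) i := by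
  simp [invSqrtPoly, PowerSeries.coeff_trunc, h]

lemma invSqrtPoly_coeff_of_le {N i : ℕ} (h : N ≤ i) : (invSqrtPoly N).coeff i = 0 := by
  simp [invSqrtPoly, PowerSeries.coeff_trunc, not_lt.mpr h]

lemma Ring.choose_neg_half_ne_zero (i : ℕ) : Ring.choose (-2⁻¹ : ℚ) i ≠ 0 := by
  rw [Ring.choose_eq_smul, ← aeval_eq_smeval, aeval_def, ← eval_map, descPochhammer_map,
    descPochhammer_eval_eq_prod_range]
  refine smul_ne_zero (by positivity) (Finset.prod_ne_zero_iff.mpr fun j _ => ?_)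
  have : (0 : ℚ) ≤ j := j.cast_nonneg
  linarith

section NilpotentAlgebra

variable {A : Type*} [CommRing A] [Algebra ℚ A]

lemma aeval_invSqrtPoly_sq_mul_one_add {ν : A} {N : ℕ} (hν : ν ^ N = 0) :
    aeval ν (invSqrtPoly N) ^ 2 * (1 + ν) = 1 := by
  obtain ⟨g, hg⟩ := X_pow_dvd_invSqrtPoly_sq_mul_sub_one N
  have h := congrArg (aeval ν) hg
  simp only [map_sub, map_mul, map_pow, map_add, map_one, aeval_X, hν, zero_mul] at h
  exact sub_eq_zero.mp h

lemma isNilpotent_aeval_invSqrtPoly_sub_one {ν : A} (hν : IsNilpotent ν) {N : ℕ}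
    (hN : 0 < N) :
    IsNilpotent (aeval ν (invSqrtPoly N) - 1) := by
  obtain ⟨g, hg⟩ := X_dvd_sub_C (p := invSqrtPoly N)
  rw [invSqrtPoly_coeff hN, Ring.choose_zero_right, map_one] at hg
  have h := congrArg (aeval ν) hg
  rw [map_sub, map_one, map_mul, aeval_X] at h
  rw [h]
  exact Commute.isNilpotent_mul_right (Commute.all _ _) hν

lemma exists_sq_eq_one_isNilpotent_mul_sub_one {w : A} (hw : IsNilpotent (w ^ 2 - 1)) :
    ∃ σ : A, σ ^ 2 = 1 ∧ IsNilpotent (σ * w - 1) := by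
  obtain ⟨N, hN⟩ := hw
  set ρ := aeval (w ^ 2 - 1) (invSqrtPoly (N + 1))
  have hρ : ρ ^ 2 * w ^ 2 = 1 := by
    have := aeval_invSqrtPoly_sq_mul_one_add (ν := w ^ 2 - 1) (by rw [pow_succ, hN, zero_mul])
    rwa [add_sub_cancel] at this
  have hρ1 : IsNilpotent (ρ - 1) := isNilpotent_aeval_invSqrtPoly_sub_one ⟨N, hN⟩ N.succ_pos
  refine ⟨ρ * w, by rw [mul_pow, hρ], ?_⟩
  have h : ρ * w * w - 1 = -(ρ * w ^ 2) * (ρ - 1) := by linear_combination hρ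
  rw [h]
  exact Commute.isNilpotent_mul_left (Commute.all _ _) hρ1

end NilpotentAlgebra

section GeomPoly

variable {R : Type*} [CommRing R]

noncomputable def geomPoly (a : R) (N : ℕ) : R[X] :=
  ∑ i ∈ Finset.range (N + 1), C (a ^ i) * X ^ (N - i)

lemma geomPoly_map {S : Type*} [CommRing S] (f : R →+* S) (a : R) (N : ℕ) :
    (geomPoly a N).map f = geomPoly (f a) N := by
  simp [geomPoly, Polynomial.map_sum]

lemma geomPoly_zero_left (N : ℕ) : geomPoly (0 : R) N = X ^ N := by
  rw [geomPoly, Finset.sum_eq_single 0 (fun i _ hi => by simp [zero_pow hi]) (by simp)]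
  simp

lemma geomPoly_mul_C_sub_X (a : R) (N : ℕ) :
    geomPoly a N * (C a - X) = C (a ^ (N + 1)) - X ^ (N + 1) := by
  rw [C_pow, ← geom_sum₂_mul, geomPoly]
  congr 1
  refine Finset.sum_congr rfl fun i _ => ?_
  rw [C_pow, Nat.add_sub_cancel]

lemma reflect_geom_sum {a : R} {M : ℕ} (N : ℕ) (hMN : M ≤ N) :
    reflect N (∑ i ∈ Finset.range (M + 1), (C a * X) ^ i) = X ^ (N - M) * geomPoly a M := by
  rw [reflect_sum, geomPoly, Finset.mul_sum]
  refine Finset.sum_congr rfl fun i hi => ?_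
  have hi : i ≤ M := Nat.lt_succ_iff.mp (Finset.mem_range.mp hi)
  rw [mul_pow, ← C_pow, reflect_C_mul_X_pow, revAt_le (hi.trans hMN),
    show N - i = (N - M) + (M - i) by omega, pow_add]
  ring

end GeomPoly

section GeomPolySqrt

variable {R : Type*} [CommRing R] [Algebra ℚ R]

/-- `t ^ m (1 - a / t) ^ (-1/2)`, truncated to a polynomial. -/
noncomputable def geomPolySqrt (a : R) (m : ℕ) : R[X] :=
  reflect m (aeval (C (-a) * X) (invSqrtPoly (m + 1)))

lemma geomPolySqrt_sq {a : R} {m M : ℕ} (ha : a ^ (m + 1) = 0) (hmM : m ≤ M)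
    (hM : M ≤ 2 * m) :
    geomPolySqrt a m ^ 2 = X ^ (2 * m - M) * geomPoly a M := by
  set f := aeval (C (-a) * X) (invSqrtPoly (m + 1))
  have hν : (C (-a) * X) ^ (m + 1) = 0 := by rw [mul_pow, ← C_pow, neg_pow, ha]; simp
  have haX : IsNilpotent (C a * X) :=
    Commute.isNilpotent_mul_right (Commute.all _ _) (IsNilpotent.map ⟨m + 1, ha⟩ C)
  have hf : f ^ 2 = ∑ i ∈ Finset.range (M + 1), (C a * X) ^ i := by
    refine haX.isUnit_one_sub.mul_left_inj.mp ?_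
    rw [geom_sum_mul_neg, mul_pow, ← C_pow, pow_eq_zero_of_le (by omega) ha]
    have := aeval_invSqrtPoly_sq_mul_one_add hν
    rw [show 1 + C (-a) * X = 1 - C a * X by rw [C_neg]; ring] at this
    rw [this, C_0, zero_mul, sub_zero]
  have hdeg : f.natDegree ≤ m := natDegree_le_iff_coeff_eq_zero.mpr fun i hi => by
    rw [coeff_aeval_C_mul_X, invSqrtPoly_coeff_of_le hi, map_zero, zero_mul]
  rw [geomPolySqrt, sq, ← reflect_mul _ _ hdeg hdeg, ← sq, hf, ← two_mul]
  exact reflect_geom_sum _ (by omega)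

lemma coeff_geomPolySqrt_zero (a : R) (m : ℕ) :
    (geomPolySqrt a m).coeff 0 = algebraMap ℚ R (Ring.choose (-2⁻¹ : ℚ) m) * (-a) ^ m := by
  rw [geomPolySqrt, coeff_reflect, revAt_zero, coeff_aeval_C_mul_X,
    invSqrtPoly_coeff m.lt_succ_self]

lemma isNilpotent_geomPolySqrt_sub_X_pow {a : R} (ha : IsNilpotent a) (m : ℕ) :
    IsNilpotent (geomPolySqrt a m - X ^ m) := by
  rw [geomPolySqrt, ← reflect_one, ← reflect_sub]
  refine isNilpotent_reflect (isNilpotent_aeval_invSqrtPoly_sub_one ?_ m.succ_pos) m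
  exact Commute.isNilpotent_mul_right (Commute.all _ _) (ha.neg.map C)

end GeomPolySqrt

lemma eq_zero_of_geomPoly_eq_sq {K : Type*} [Field K] [CharZero K] {c : K} {n : ℕ}
    (hn : 0 < n) {Q : K[X]} (hQ : geomPoly c (2 * n) = Q ^ 2) : c = 0 := by
  by_contra hc
  have hprod : Q ^ 2 * (C c - X) = C (c ^ (2 * n + 1)) - X ^ (2 * n + 1) := by
    rw [← hQ, geomPoly_mul_C_sub_X]
  have hsqfree : Squarefree (X ^ (2 * n + 1) - C (c ^ (2 * n + 1))) :=
    (separable_X_pow_sub_C _ (by norm_cast) (pow_ne_zero _ hc)).squarefree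
  have hQunit : IsUnit Q := hsqfree Q ⟨X - C c, by linear_combination hprod⟩
  have hdeg : (Q ^ 2 * (C c - X)).natDegree ≤ 1 := by
    refine natDegree_mul_le.trans ?_
    rw [natDegree_eq_zero_of_isUnit (hQunit.pow 2), zero_add]
    exact (natDegree_sub_le _ _).trans (by simp)
  rw [hprod, ← neg_sub, natDegree_neg, natDegree_X_pow_sub_C] at hdeg
  omega

section Necessity

variable {R : Type*} [CommRing R] [Algebra ℚ R] {a : R} {n : ℕ} {q : R[X]}

lemma isNilpotent_of_geomPoly_eq_sq (hn : 0 < n) (hq : geomPoly a (2 * n) = q ^ 2) :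
    IsNilpotent a ∧ IsNilpotent (q - C (q.coeff n) * X ^ n) ∧
      IsNilpotent (q.coeff n ^ 2 - 1) := by
  have key : ∀ (p : Ideal R) [p.IsPrime], algebraMap R p.ResidueField a = 0 ∧
      (q.map (algebraMap R p.ResidueField) = X ^ n ∨
        q.map (algebraMap R p.ResidueField) = -X ^ n) := by
    intro p _
    have : CharZero p.ResidueField := charZero_of_injective_ringHom
      ((algebraMap R p.ResidueField).comp (algebraMap ℚ R)).injective
    have hQ := congrArg (Polynomial.map (algebraMap R p.ResidueField)) hq
    rw [geomPoly_map, Polynomial.map_pow] at hQ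
    have ha := eq_zero_of_geomPoly_eq_sq hn hQ
    rw [ha, geomPoly_zero_left, pow_mul', eq_comm, sq_eq_sq_iff_eq_or_eq_neg] at hQ
    exact ⟨ha, hQ⟩
  refine ⟨isNilpotent_of_forall_residueField fun p _ => (key p).1,
    isNilpotent_of_forall_map_residueField fun p _ => ?_,
    isNilpotent_of_forall_residueField fun p _ => ?_⟩
  · rw [Polynomial.map_sub, Polynomial.map_mul, map_C, Polynomial.map_pow, map_X, ← coeff_map]
    rcases (key p).2 with h | h <;> simp [h]
  · rw [map_sub, map_pow, map_one, ← coeff_map]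
    rcases (key p).2 with h | h <;> simp [h]

lemma pow_succ_eq_zero_of_pow_add_two_eq_zero (hn : 0 < n) (ha : a ^ (n + 2) = 0)
    (hq : geomPoly a (2 * n) = q ^ 2) (hqX : IsNilpotent (q - C (q.coeff n) * X ^ n))
    (hqn : IsNilpotent (q.coeff n ^ 2 - 1)) : a ^ (n + 1) = 0 := by
  obtain ⟨σ, hσ, hσq⟩ := exists_sq_eq_one_isNilpotent_mul_sub_one hqn
  set r := geomPolySqrt a (n + 1)
  set s := C σ * X * q
  have hrs : r ^ 2 = s ^ 2 := by
    rw [geomPolySqrt_sq (M := 2 * n) ha (by omega) (by omega),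
      show 2 * (n + 1) - 2 * n = 2 by omega, hq, mul_pow, mul_pow, ← C_pow, hσ, C_1, one_mul]
  have hr : IsNilpotent (r - X ^ (n + 1)) := isNilpotent_geomPolySqrt_sub_X_pow ⟨n + 2, ha⟩ _
  have hs : IsNilpotent (s - X ^ (n + 1)) := by
    have : s - X ^ (n + 1) =
        C σ * X * (q - C (q.coeff n) * X ^ n) + C (σ * q.coeff n - 1) * X ^ (n + 1) := by
      rw [C_sub, C_mul, C_1]; ring
    rw [this]
    exact Commute.isNilpotent_add (Commute.all _ _)
      (Commute.isNilpotent_mul_left (Commute.all _ _) hqX)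
      (Commute.isNilpotent_mul_right (Commute.all _ _) (hσq.map C))
  have h2 : IsUnit (2 : R) := by
    simpa only [map_ofNat] using (isUnit_of_invertible (2 : ℚ)).map (algebraMap ℚ R)
  have hreg : r + s ∈ nonZeroDivisors R[X] := by
    have : r + s = C 2 * X ^ (n + 1) + ((r - X ^ (n + 1)) + (s - X ^ (n + 1))) := by
      rw [C_ofNat]; ring
    rw [this]
    refine add_mem_nonZeroDivisors_of_isNilpotent ?_
      (Commute.isNilpotent_add (Commute.all _ _) hr hs)
    exact mul_mem_nonZeroDivisors.mpr ⟨(isUnit_C.mpr h2).mem_nonZeroDivisors,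
      (monic_X_pow _).mem_nonZeroDivisors⟩
  have hrs' : r = s := by
    rw [← sub_eq_zero, ← mul_right_mem_nonZeroDivisors_eq_zero_iff hreg]
    linear_combination hrs
  have hcoeff := congrArg (coeff · 0) hrs'
  simp only [r, s, coeff_geomPolySqrt_zero, mul_assoc, coeff_C_mul, coeff_X_mul_zero,
    mul_zero] at hcoeff
  have hβ : IsUnit (algebraMap ℚ R (Ring.choose (-2⁻¹ : ℚ) (n + 1))) :=
    (isUnit_iff_ne_zero.mpr (Ring.choose_neg_half_ne_zero _)).map _
  rwa [hβ.mul_right_eq_zero, neg_pow, (isUnit_neg_one.pow _).mul_right_eq_zero] at hcoeff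

lemma pow_succ_eq_zero_of_geomPoly_eq_sq (hn : 0 < n) (hq : geomPoly a (2 * n) = q ^ 2) :
    a ^ (n + 1) = 0 := by
  obtain ⟨ha, hqX, hqn⟩ := isNilpotent_of_geomPoly_eq_sq hn hq
  let π := Ideal.Quotient.mk (Ideal.span {a ^ (n + 2)})
  refine pow_eq_zero_of_mem_span_pow_succ ha (Ideal.Quotient.eq_zero_iff_mem.mp ?_)
  rw [map_pow]
  refine pow_succ_eq_zero_of_pow_add_two_eq_zero (q := q.map π) hn ?_ ?_ ?_ ?_
  · rw [← map_pow, Ideal.Quotient.eq_zero_iff_mem]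
    exact Ideal.subset_span rfl
  · rw [← geomPoly_map, hq, Polynomial.map_pow]
  · simpa using hqX.map (mapRingHom π)
  · simpa using hqn.map π

end Necessity

/-- Abel's lemma on odd nilpotency: for a commutative ring `R` containing `ℚ`,
`a ∈ R` and `n ≥ 1`, the polynomial
`(t^{2n+1} - a^{2n+1})/(t - a) = ∑_{i=0}^{2n} a^i t^{2n-i}` is a square in `R[t]`
iff `a^{n+1} = 0`. -/
theorem abel_odd_nilpotency (R : Type*) [CommRing R] [Algebra ℚ R] (a : R) (n : ℕ)
    (hn : 0 < n) :
    (∃ q : Polynomial R,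
        (∑ i ∈ Finset.range (2 * n + 1), C (a ^ i) * X ^ (2 * n - i)) = q ^ 2) ↔
      a ^ (n + 1) = 0 := by
  refine ⟨fun ⟨q, hq⟩ => pow_succ_eq_zero_of_geomPoly_eq_sq hn hq,
    fun ha => ⟨geomPolySqrt a n, ?_⟩⟩
  rw [geomPolySqrt_sq (M := 2 * n) ha (by omega) le_rfl, Nat.sub_self, pow_zero, one_mul,
    geomPoly]
end

section
/- For every integer n > 0, the coefficient of s^{n+1} in the formal power series √((1-s^{2n+1})/(1-s)) over ℚ is nonzero; more precisely, modulo s^{n+2} this power series is congruent to (1-s)^{-1/2}, all of whose coefficients are nonzero. -/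
/-!
The series `g = (1 - X)^{-1/2}`, i.e. the binomial series `(1 + X)^{-1/2}` at `-X`, has
coefficients `binom(2k,k)/4^k` and squares to `1/(1 - X) = ∑ X^k`. Hence `f^2 - g^2` is divisible
by `X^{2n+1}`. As `f^2 - g^2 = (f + g)(f - g)` and `f + g` has constant coefficient `2`, a unit,
`f ≡ g` modulo `X^{2n+1}`, which covers the coefficients up to degree `n + 1` once `n > 0`.
-/

theorem Ring.succ_nsmul_choose_succ {R : Type*} [Ring R] [BinomialRing R] [NatPowAssoc R]
    (r : R) (k : ℕ) : (k + 1) • Ring.choose r (k + 1) = Ring.choose r k * (r - k) := by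
  have h := Ring.choose_smul_choose r (Nat.le_add_right k 1)
  rwa [Nat.choose_succ_self_right, Nat.add_sub_cancel_left, Ring.choose_one_right] at h

theorem Ring.choose_neg_one {R : Type*} [Ring R] [BinomialRing R] [NatPowAssoc R] (k : ℕ) :
    Ring.choose (-1 : R) k = (-1) ^ k := by
  rw [Ring.choose_neg, add_sub_cancel_left, Ring.choose_natCast, Nat.choose_self, Nat.cast_one,
    Units.smul_def, Int.coe_negOnePow_natCast, zsmul_one]
  simp

theorem Ring.choose_neg_half {K : Type*} [Field K] [CharZero K] (k : ℕ) :
    Ring.choose (-2⁻¹ : K) k = (-1) ^ k * k.centralBinom / 4 ^ k := by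
  induction k with
  | zero => simp
  | succ k ih =>
    have h := Ring.succ_nsmul_choose_succ (-2⁻¹ : K) k
    have hc : ((k : K) + 1) * (k + 1).centralBinom = 2 * (2 * k + 1) * k.centralBinom := by
      exact_mod_cast Nat.succ_mul_centralBinom_succ k
    rw [ih, nsmul_eq_mul] at h
    push_cast at h
    apply mul_left_cancel₀ (Nat.cast_add_one_ne_zero k : (k : K) + 1 ≠ 0)
    rw [h]
    field_simp
    linear_combination (2 * (-1) ^ k * 4 ^ k) * hc

namespace PowerSeries

theorem X_pow_dvd_sub_of_X_pow_dvd_sq_sub_sq {R : Type*} [CommRing R] {f g : R⟦X⟧} {m : ℕ}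
    (hfg : IsUnit (constantCoeff f + constantCoeff g)) (h : X ^ m ∣ f ^ 2 - g ^ 2) :
    X ^ m ∣ f - g := by
  rw [sq_sub_sq] at h
  exact (IsUnit.dvd_mul_left (isUnit_iff_constantCoeff.mpr (by rwa [map_add]))).mp h

variable (K : Type*) [Field K] [CharZero K]

noncomputable def invSqrtOneSub : K⟦X⟧ :=
  rescale (-1) (binomialSeries K (-2⁻¹ : K))

theorem coeff_invSqrtOneSub (k : ℕ) :
    coeff k (invSqrtOneSub K) = k.centralBinom / 4 ^ k := by
  rw [invSqrtOneSub, coeff_rescale, binomialSeries_coeff, Ring.choose_neg_half, smul_eq_mul,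
    mul_one, ← mul_div_assoc, ← mul_assoc, ← mul_pow, neg_one_mul, neg_neg, one_pow, one_mul]

theorem invSqrtOneSub_sq : invSqrtOneSub K ^ 2 = mk 1 := by
  ext k
  rw [invSqrtOneSub, ← map_pow, sq, ← binomialSeries_add, show (-2⁻¹ + -2⁻¹ : K) = -1 by ring,
    coeff_rescale, binomialSeries_coeff, Ring.choose_neg_one]
  simp [← mul_pow]

end PowerSeries

open PowerSeries in
/-- For `n > 0`, the unique square root `f` (with constant term `1`) of
`(1 - s^{2n+1})/(1 - s) = 1 + s + ⋯ + s^{2n}` in `ℚ[[s]]` agrees with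
`(1-s)^{-1/2} = ∑ binom(2k,k)/4^k s^k` in all coefficients up to degree `n+1`;
in particular its coefficient of `s^{n+1}` is nonzero. -/
theorem sqrt_geometric_coeff (n : ℕ) (hn : 0 < n) (f : PowerSeries ℚ)
    (h1 : PowerSeries.constantCoeff f = 1)
    (hsq : f ^ 2 = ∑ i ∈ Finset.range (2 * n + 1), (PowerSeries.X : PowerSeries ℚ) ^ i) :
    (∀ k ≤ n + 1, PowerSeries.coeff k f = (Nat.choose (2 * k) k : ℚ) / 4 ^ k) ∧
      PowerSeries.coeff (n + 1) f ≠ 0 := by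
  have hsq_sub : X ^ (2 * n + 1) ∣ f ^ 2 - invSqrtOneSub ℚ ^ 2 := by
    refine X_pow_dvd_iff.mpr fun k hk => ?_
    simp [hsq, invSqrtOneSub_sq, hk]
  have hsub : X ^ (2 * n + 1) ∣ f - invSqrtOneSub ℚ :=
    X_pow_dvd_sub_of_X_pow_dvd_sq_sub_sq (by norm_num [h1, ← coeff_zero_eq_constantCoeff_apply,
      coeff_invSqrtOneSub]) hsq_sub
  have hcoeff : ∀ k ≤ n + 1, coeff k f = coeff k (invSqrtOneSub ℚ) := fun k hk =>
    sub_eq_zero.mp <| by simpa using X_pow_dvd_iff.mp hsub k (by omega)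
  refine ⟨fun k hk => ?_, ?_⟩
  · rw [hcoeff k hk, coeff_invSqrtOneSub, Nat.centralBinom_eq_two_mul_choose]
  · rw [hcoeff (n + 1) le_rfl, coeff_invSqrtOneSub]
    have := Nat.centralBinom_pos (n + 1)
    positivity
end

section
/- Let k be a field with char k ≠ 2, and suppose P, R, Q ∈ k[x] satisfy P² − R Q² = 1. Fix an integer m > 1 and a primitive m-th root of unity ζ ∈ k, and suppose that P(ζx) = P(x), R(ζx) = ζ^{2g+2} R(x) and Q(ζx) = ζ^{-(g+1)} Q(x) for the ζ-action, where deg R = 2g+2. If moreover R is squarefree, then 2g+2 is congruent to 0 or 1 modulo m. -/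
/-!
The triple is equivariant under `x ↦ ζx`, so each nonzero monomial `c xⁱ` of `R` satisfies
`ζⁱ = ζ^(2g+2)`, i.e. `i ≡ 2g+2 (mod m)`. Apply this to the lowest monomial of `R`:
since `R` is squarefree, `x²` does not divide it, so that monomial has degree `0` or `1`.
-/

open Polynomial

namespace Polynomial

theorem natTrailingDegree_le_one_of_squarefree {R : Type*} [Semiring R] [Nontrivial R]
    {p : R[X]} (hp : Squarefree p) : p.natTrailingDegree ≤ 1 := by
  by_contra! h
  have hX2 : X * X ∣ p := by
    rw [← sq, X_pow_dvd_iff]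
    intro d hd
    exact coeff_eq_zero_of_lt_natTrailingDegree (by omega)
  exact not_isUnit_X (hp X hX2)

theorem pow_eq_of_comp_C_mul_X_eq_C_mul {R : Type*} [CommRing R] [IsDomain R]
    {p : R[X]} {a c : R} {i : ℕ} (h : p.comp (C a * X) = C c * p) (hi : p.coeff i ≠ 0) :
    a ^ i = c := by
  have hcoeff := congrArg (coeff · i) h
  simp only [comp_C_mul_X_coeff, coeff_C_mul] at hcoeff
  exact mul_left_cancel₀ hi (hcoeff.trans (mul_comm _ _))

end Polynomial

theorem mu_m_fixed_points_congruence_general (k : Type*) [Field k]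
    (m : ℕ) (hm : 1 < m) (ζ : k) (hζ : IsPrimitiveRoot ζ m) (g : ℕ)
    (R : Polynomial k) (hsf : Squarefree R)
    (hR : R.comp (C ζ * X) = C (ζ ^ (2 * g + 2)) * R) :
    (2 * g + 2) % m = 0 ∨ (2 * g + 2) % m = 1 := by
  have hlow : R.coeff R.natTrailingDegree ≠ 0 :=
    coeff_natTrailingDegree_ne_zero.mpr hsf.ne_zero
  have hmod : R.natTrailingDegree % m = (2 * g + 2) % m := by
    rw [hζ.eq_orderOf]
    exact (hζ.isOfFinOrder (by omega)).pow_inj_mod.mp (pow_eq_of_comp_C_mul_X_eq_C_mul hR hlow)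
  have hle := natTrailingDegree_le_one_of_squarefree hsf
  have := Nat.mod_le R.natTrailingDegree m
  omega

/-- Fixed points of `μ_m` on the space of Pell solutions: if `(P,R,Q)` solves
`P² - RQ² = 1` with `R` squarefree of degree `2g+2`, and the triple is equivariant
under `x ↦ ζx` for a primitive `m`-th root of unity `ζ` (with `P`, `R`, `Q`
homogeneous of degrees `0`, `2g+2`, `-(g+1)` mod `m`), then `2g+2 ≡ 0` or `1 (mod m)`. -/
theorem mu_m_fixed_points_congruence (k : Type*) [Field k] (h2 : (2 : k) ≠ 0)
    (m : ℕ) (hm : 1 < m) (ζ : k) (hζ : IsPrimitiveRoot ζ m) (g : ℕ)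
    (P R Q : Polynomial k) (hpell : P ^ 2 - R * Q ^ 2 = 1)
    (hdeg : R.natDegree = 2 * g + 2) (hsf : Squarefree R)
    (hP : P.comp (C ζ * X) = P)
    (hR : R.comp (C ζ * X) = C (ζ ^ (2 * g + 2)) * R)
    (hQ : C (ζ ^ (g + 1)) * Q.comp (C ζ * X) = Q) :
    (2 * g + 2) % m = 0 ∨ (2 * g + 2) % m = 1 :=
  mu_m_fixed_points_congruence_general k m hm ζ hζ g R hsf hR
end

section
/- Let k be a field of characteristic zero and let p ∈ k[x] be a monic polynomial of degree n with next-to-highest coefficient a (i.e. p(x) = x^n + a x^{n-1} + ⋯). Then the coefficients of p can be recovered as polynomial expressions in the coefficients of p(x) + 2(x − a)·p'(x); in particular, the map p ↦ (p + 2(x−a)p')/(2n+1) is a bijection from monic degree-n polynomials onto monic degree-n polynomials (given the constraint relating a to p). -/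
/-!
Put `L_a r = r + 2(X - a) r'`. On coefficients,
`(L_a r)ᵢ = (2i + 1) rᵢ - 2a(i + 1) rᵢ₊₁`, an upper triangular action with diagonal
entries `2i + 1 ≠ 0`, so `L_a` is injective and hence bijective on polynomials of degree `≤ n`.
If `p` is monic of degree `n` and `a = p_{n-1}`, the coefficient of `X^{n-1}` in `L_a p` is
`(2n - 1)a - 2na = -a`: the parameter `a` is read off from the image, and then `p` is the
unique preimage of the image under `L_a`.
-/

open Polynomial

namespace Polynomial

theorem monic_and_natDegree_eq_iff {R : Type*} [Semiring R] [Nontrivial R] {q : R[X]} {n : ℕ}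
    (hq : q.natDegree ≤ n) : q.Monic ∧ q.natDegree = n ↔ q.coeff n = 1 :=
  ⟨fun ⟨hm, hd⟩ => hd ▸ hm.coeff_natDegree, fun h =>
    ⟨monic_of_natDegree_le_of_coeff_eq_one n hq h,
      natDegree_eq_of_le_of_coeff_ne_zero hq (h ▸ one_ne_zero)⟩⟩

section CommRing

variable {R : Type*} [CommRing R]

/-- `1 + 2θ`, where `θ = (X - a) d/dX` is the Euler operator centred at `a`. -/
noncomputable def shiftedEuler (a : R) : R[X] →ₗ[R] R[X] where
  toFun r := r + 2 * (X - C a) * derivative r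
  map_add' r s := by simp only [derivative_add]; ring
  map_smul' c r := by simp only [smul_eq_C_mul, derivative_C_mul, RingHom.id_apply]; ring

theorem shiftedEuler_apply (a : R) (r : R[X]) :
    shiftedEuler a r = r + 2 * (X - C a) * derivative r := rfl

theorem coeff_shiftedEuler (a : R) (r : R[X]) (i : ℕ) :
    (shiftedEuler a r).coeff i = (2 * i + 1) * r.coeff i - 2 * a * (i + 1) * r.coeff (i + 1) := by
  have h : shiftedEuler a r = r + C 2 * (X * derivative r) - C (2 * a) * derivative r := by
    rw [shiftedEuler_apply, C_mul, ← map_ofNat C 2]; ring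
  rw [h]
  rcases i with _ | i
  · simp [coeff_derivative, mul_coeff_zero]
  · simp [coeff_X_mul, coeff_derivative, coeff_C_mul, mul_assoc]; ring

variable {a : R} {r : R[X]} {n : ℕ}

theorem coeff_shiftedEuler_of_natDegree_le (h : r.natDegree ≤ n) :
    (shiftedEuler a r).coeff n = ((2 * n + 1 : ℕ) : R) * r.coeff n := by
  rw [coeff_shiftedEuler, coeff_eq_zero_of_natDegree_lt (Nat.lt_succ_of_le h)]; push_cast; ring

theorem natDegree_shiftedEuler_le (h : r.natDegree ≤ n) : (shiftedEuler a r).natDegree ≤ n := by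
  refine natDegree_le_iff_coeff_eq_zero.2 fun i hi => ?_
  rw [coeff_shiftedEuler, coeff_eq_zero_of_natDegree_lt (h.trans_lt hi),
    coeff_eq_zero_of_natDegree_lt (h.trans_lt (hi.trans (Nat.lt_succ_self i)))]
  ring

theorem coeff_shiftedEuler_coeff_self {p : R[X]} {m : ℕ} (hp : p.coeff (m + 1) = 1) :
    (shiftedEuler (p.coeff m) p).coeff m = -p.coeff m := by
  rw [coeff_shiftedEuler, hp]; ring

theorem shiftedEuler_injective [IsDomain R] [CharZero R] (a : R) :
    Function.Injective (shiftedEuler a) := by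
  refine (injective_iff_map_eq_zero _).2 fun r hr => ?_
  by_contra hr0
  have h := coeff_shiftedEuler_of_natDegree_le (a := a) (le_refl r.natDegree)
  rw [hr, coeff_zero, eq_comm] at h
  have h2 : ((2 * r.natDegree + 1 : ℕ) : R) ≠ 0 := Nat.cast_ne_zero.2 (Nat.succ_ne_zero _)
  exact hr0 (leadingCoeff_eq_zero.1 ((mul_eq_zero.1 h).resolve_left h2))

end CommRing

theorem exists_natDegree_le_shiftedEuler_eq {k : Type*} [Field k] [CharZero k] (a : k) {n : ℕ}
    {q : k[X]} (hq : q.natDegree ≤ n) :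
    ∃ p : k[X], p.natDegree ≤ n ∧ shiftedEuler a p = q := by
  have mem : ∀ r : k[X], r ∈ degreeLT k (n + 1) ↔ r.natDegree ≤ n := fun r => by
    rw [degreeLT_succ_eq_degreeLE, mem_degreeLE, natDegree_le_iff_degree_le]
  let f := (shiftedEuler a).restrict (p := degreeLT k (n + 1)) (q := degreeLT k (n + 1))
    fun r hr => (mem _).2 (natDegree_shiftedEuler_le ((mem r).1 hr))
  have hf : Function.Surjective f := LinearMap.injective_iff_surjective.1 fun r s h =>
    Subtype.ext (shiftedEuler_injective a (congrArg Subtype.val h))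
  obtain ⟨p, hp⟩ := hf ⟨q, (mem q).2 hq⟩
  exact ⟨p, (mem p).1 p.2, congrArg Subtype.val hp⟩

section Recovery

variable {k : Type*} [Field k] [CharZero k] {m : ℕ}

/-- Indexed by `m = n - 1`, so that `a = p.coeff m` involves no truncated subtraction. -/
noncomputable def recoveryMap (m : ℕ) (p : k[X]) : k[X] :=
  C ((2 * (m + 1) + 1 : ℕ) : k)⁻¹ * shiftedEuler (p.coeff m) p

theorem mapsTo_recoveryMap :
    Set.MapsTo (recoveryMap m) {p : k[X] | p.Monic ∧ p.natDegree = m + 1}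
      {p | p.Monic ∧ p.natDegree = m + 1} := by
  rintro p ⟨hm, hd⟩
  have hc : ((2 * (m + 1) + 1 : ℕ) : k) ≠ 0 := Nat.cast_ne_zero.2 (Nat.succ_ne_zero _)
  refine (monic_and_natDegree_eq_iff ((natDegree_C_mul_le _ _).trans
    (natDegree_shiftedEuler_le hd.le))).2 ?_
  rw [coeff_C_mul, coeff_shiftedEuler_of_natDegree_le hd.le, ← hd,
    hm.coeff_natDegree, hd, mul_one, inv_mul_cancel₀ hc]

theorem injOn_recoveryMap :
    Set.InjOn (recoveryMap m) {p : k[X] | p.Monic ∧ p.natDegree = m + 1} := by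
  rintro p ⟨hpm, hpd⟩ q ⟨hqm, hqd⟩ h
  have hc : ((2 * (m + 1) + 1 : ℕ) : k)⁻¹ ≠ 0 :=
    inv_ne_zero (Nat.cast_ne_zero.2 (Nat.succ_ne_zero _))
  have h' : shiftedEuler (p.coeff m) p = shiftedEuler (q.coeff m) q :=
    mul_left_cancel₀ (C_ne_zero.2 hc) h
  have ha : p.coeff m = q.coeff m := by
    have := congrArg (coeff · m) h'
    rwa [coeff_shiftedEuler_coeff_self (hpd ▸ hpm.coeff_natDegree),
      coeff_shiftedEuler_coeff_self (hqd ▸ hqm.coeff_natDegree), neg_inj] at this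
  rw [ha] at h'
  exact shiftedEuler_injective _ h'

theorem surjOn_recoveryMap :
    Set.SurjOn (recoveryMap m) {p : k[X] | p.Monic ∧ p.natDegree = m + 1}
      {p | p.Monic ∧ p.natDegree = m + 1} := by
  rintro q ⟨hqm, hqd⟩
  set c : k := ((2 * (m + 1) + 1 : ℕ) : k)
  have hc : c ≠ 0 := Nat.cast_ne_zero.2 (Nat.succ_ne_zero _)
  set a := -(c * q.coeff m)
  obtain ⟨p, hpd, hp⟩ := exists_natDegree_le_shiftedEuler_eq a
    ((natDegree_C_mul_le c q).trans hqd.le)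
  have hp1 : p.coeff (m + 1) = 1 := by
    have := congrArg (coeff · (m + 1)) hp
    rw [coeff_shiftedEuler_of_natDegree_le hpd, coeff_C_mul, ← hqd, hqm.coeff_natDegree,
      hqd] at this
    exact mul_left_cancel₀ hc this
  have hpa : p.coeff m = a := by
    have := congrArg (coeff · m) hp
    simp only [coeff_shiftedEuler, coeff_C_mul, hp1] at this
    have h2m : (2 * m + 1 : k) ≠ 0 := by exact_mod_cast Nat.succ_ne_zero (2 * m)
    refine mul_left_cancel₀ h2m ?_
    simp only [c, a] at this ⊢
    push_cast at this ⊢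
    linear_combination this
  refine ⟨p, (monic_and_natDegree_eq_iff hpd).2 hp1, ?_⟩
  rw [recoveryMap, hpa, hp, ← mul_assoc, ← C_mul, inv_mul_cancel₀ hc, C_1, one_mul]

end Recovery

end Polynomial

/-- For a monic polynomial `p` of degree `n ≥ 1` with next-to-highest coefficient
`a = p.coeff (n-1)`, the assignment `p ↦ (p + 2(x - a)p')/(2n+1)` is a bijection
from monic degree-`n` polynomials onto monic degree-`n` polynomials: the
coefficients of `p` are polynomial expressions in those of `p + 2(x-a)p'`. -/
theorem monic_recovery_bijective (k : Type*) [Field k] [CharZero k] (n : ℕ)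
    (hn : 1 ≤ n) :
    Set.BijOn
      (fun p : Polynomial k =>
        C (((2 * n + 1 : ℕ) : k))⁻¹ *
          (p + 2 * (X - C (p.coeff (n - 1))) * derivative p))
      {p | p.Monic ∧ p.natDegree = n} {p | p.Monic ∧ p.natDegree = n} := by
  obtain ⟨m, rfl⟩ : ∃ m, n = m + 1 := ⟨n - 1, by omega⟩
  exact ⟨mapsTo_recoveryMap, injOn_recoveryMap, surjOn_recoveryMap⟩
end

section
/- Let R be a commutative ring, let e ≥ 1 and b ∈ R. Under the R-algebra map R[[t]] → R[[x]] sending t to x^e + b, the ring R[[x]] is isomorphic as R[[t]]-algebra to R[[t]][x]/(x^e + b − t) (a free module of rank e), and the norm of the element x with respect to this finite free extension equals (−1)^{e+1}(t − b) up to sign, i.e. N(x) = ±(t − b). -/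
/-!
The substitution `t ↦ x^e + b` factors as `t ↦ t + b` followed by `t ↦ x^e`. The first is an
automorphism of `R[[t]]` since `b` is nilpotent (its inverse is `t ↦ t - b`). For the second,
sorting the exponents of `x` by their residue mod `e` shows that `1, x, …, x^(e-1)` is an
`R[[t]]`-basis of `R[[x]]`. Hence the lift `R[[t]][x]/(x^e + b - t) → R[[x]]` sends the power
basis of the quotient to a basis and is bijective. Finally, the norm of the root of a monic `f`
is `(-1)^(deg f) f(0)`.
-/

open Polynomial

namespace AdjoinRoot

variable {A B : Type*} [CommRing A] [CommRing B] {f : A[X]}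

theorem minpoly_root_of_monic (hf : f.Monic) : minpoly A (root f) = f := by
  refine (minpoly.unique' A _ hf (by rw [aeval_eq, mk_self]) fun q hq =>
    or_iff_not_imp_left.2 fun hq0 h0 => ?_).symm
  rw [aeval_eq, mk_eq_zero] at h0
  exact hf.not_dvd_of_degree_lt hq0 hq h0

theorem norm_root_of_monic (hf : f.Monic) :
    Algebra.norm A (root f) = (-1) ^ f.natDegree * f.coeff 0 := by
  rw [← powerBasis'_gen hf, Algebra.PowerBasis.norm_gen_eq_coeff_zero_minpoly, powerBasis'_gen,
    minpoly_root_of_monic hf, powerBasis'_dim]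

theorem lift_bijective_of_sum_bijective (hf : f.Monic) {n : ℕ} (hn : f.natDegree = n)
    (g : A →+* B) (x : B) (hx : f.eval₂ g x = 0)
    (h : Function.Bijective fun G : Fin n → A => ∑ i, g (G i) * x ^ (i : ℕ)) :
    Function.Bijective (lift g x hx) := by
  subst hn
  set pb := powerBasis' hf
  have hlift : ⇑(lift g x hx) =
      (fun G : Fin pb.dim → A => ∑ i, g (G i) * x ^ (i : ℕ)) ∘ pb.basis.equivFun := by
    funext z
    conv_lhs => rw [← pb.basis.sum_repr z]
    simp [pb, map_sum, Algebra.smul_def, PowerBasis.coe_basis, lift_of, lift_root]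
  rw [hlift]
  exact h.comp pb.basis.equivFun.bijective

end AdjoinRoot

namespace PowerSeries

variable {R : Type*} [CommRing R]

theorem hasSubst_X_pow_add_C {e : ℕ} (he : e ≠ 0) {b : R} (hb : IsNilpotent b) :
    HasSubst (X ^ e + C b : R⟦X⟧) := by
  change IsNilpotent (constantCoeff (X ^ e + C b))
  simpa [he] using hb

theorem hasSubst_X_add_C {b : R} (hb : IsNilpotent b) : HasSubst (X + C b : R⟦X⟧) := by
  simpa using hasSubst_X_pow_add_C one_ne_zero hb

theorem subst_X_add_C_subst_X_add_C {b c : R} (hb : IsNilpotent b) (hc : IsNilpotent c)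
    (F : R⟦X⟧) : subst (X + C b) (subst (X + C c) F) = subst (X + C (c + b) : R⟦X⟧) F := by
  rw [subst_comp_subst_apply (hasSubst_X_add_C hc) (hasSubst_X_add_C hb)]
  congr 1
  rw [subst_add (hasSubst_X_add_C hb), subst_X (hasSubst_X_add_C hb), subst_C]
  change X + C b + C c = X + C (c + b)
  rw [map_add]
  ring

theorem subst_X_add_C_bijective {b : R} (hb : IsNilpotent b) :
    Function.Bijective (subst (X + C b : R⟦X⟧) : R⟦X⟧ → R⟦X⟧) := by
  refine Function.bijective_iff_has_inverse.2 ⟨subst (X + C (-b) : R⟦X⟧), fun F => ?_, fun F => ?_⟩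
  · rw [subst_X_add_C_subst_X_add_C hb.neg hb, add_neg_cancel, map_zero, add_zero, X_subst]
  · rw [subst_X_add_C_subst_X_add_C hb hb.neg, neg_add_cancel, map_zero, add_zero, X_subst]

theorem subst_X_pow_add_C_eq_expand {e : ℕ} (he : e ≠ 0) {b : R} (hb : IsNilpotent b)
    (F : R⟦X⟧) : subst (X ^ e + C b : R⟦X⟧) F = expand e he (subst (X + C b : R⟦X⟧) F) := by
  rw [expand_apply, subst_comp_subst_apply (hasSubst_X_add_C hb) (HasSubst.X_pow he),
    subst_add (HasSubst.X_pow he), subst_X (HasSubst.X_pow he), subst_C]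
  rfl

theorem coeff_sum_expand_mul_X_pow {e : ℕ} (he : e ≠ 0) (G : Fin e → R⟦X⟧) (n : ℕ) :
    coeff n (∑ i, expand e he (G i) * X ^ (i : ℕ)) =
      coeff (n / e) (G ⟨n % e, Nat.mod_lt n (Nat.pos_of_ne_zero he)⟩) := by
  rw [map_sum, Finset.sum_eq_single_of_mem _ (Finset.mem_univ ⟨n % e, _⟩) fun i _ hi => ?_]
  · have hn : n - n % e = e * (n / e) := by have := Nat.div_add_mod n e; omega
    rw [coeff_mul_X_pow', if_pos (Nat.mod_le n e), hn, coeff_expand_mul]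
  · rw [coeff_mul_X_pow']
    split_ifs with hin
    · refine coeff_expand_of_not_dvd e he _ fun ⟨k, hk⟩ => hi (Fin.ext ?_)
      have hn : n = i + e * k := by omega
      simp only [hn, Nat.add_mul_mod_self_left, Nat.mod_eq_of_lt i.isLt]
    · rfl

theorem sum_expand_mul_X_pow_bijective {e : ℕ} (he : e ≠ 0) :
    Function.Bijective fun G : Fin e → R⟦X⟧ => ∑ i, expand e he (G i) * X ^ (i : ℕ) := by
  have hdiv (i : Fin e) (j : ℕ) : (e * j + i) / e = j := by
    rw [Nat.mul_add_div (Nat.pos_of_ne_zero he), Nat.div_eq_of_lt i.isLt, add_zero]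
  have hmod (i : Fin e) (j : ℕ) : (e * j + i) % e = i := by
    rw [Nat.mul_add_mod, Nat.mod_eq_of_lt i.isLt]
  refine ⟨fun G G' h => funext fun i => ext fun j => ?_, fun F => ?_⟩
  · have := congrArg (coeff (e * j + i)) h
    simpa only [coeff_sum_expand_mul_X_pow, hdiv, hmod] using this
  · refine ⟨fun i => mk fun j => coeff (e * j + i) F, ext fun n => ?_⟩
    rw [coeff_sum_expand_mul_X_pow, coeff_mk, Nat.div_add_mod]

theorem sum_subst_X_pow_add_C_mul_X_pow_bijective {e : ℕ} (he : e ≠ 0) {b : R}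
    (hb : IsNilpotent b) :
    Function.Bijective fun G : Fin e → R⟦X⟧ =>
      ∑ i, subst (X ^ e + C b : R⟦X⟧) (G i) * X ^ (i : ℕ) := by
  have hcomp : (fun G : Fin e → R⟦X⟧ => ∑ i, subst (X ^ e + C b : R⟦X⟧) (G i) * X ^ (i : ℕ)) =
      (fun G : Fin e → R⟦X⟧ => ∑ i, expand e he (G i) * X ^ (i : ℕ)) ∘
        fun G i => subst (X + C b : R⟦X⟧) (G i) :=
    funext fun G => by simp only [Function.comp_apply, subst_X_pow_add_C_eq_expand he hb]
  rw [hcomp]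
  exact (sum_expand_mul_X_pow_bijective he).comp (subst_X_add_C_bijective hb).comp_left

end PowerSeries

/-- Under `t ↦ x^e + b` (`b` nilpotent, `e ≥ 1`), `R[[x]]` is isomorphic to
`R[[t]][x]/(x^e + b - t)`, a free `R[[t]]`-module of rank `e`, and the norm of
`x` for this extension is `±(t - b)`, namely `N(x) = (-1)^{e+1}(t - b)`. -/
theorem norm_in_weierstrass_extension (R : Type*) [CommRing R] [Nontrivial R]
    (e : ℕ) (he : 1 ≤ e) (b : R) (hb : IsNilpotent b)
    (f : Polynomial (PowerSeries R))
    (hf : f = X ^ e + C (PowerSeries.C b - PowerSeries.X)) :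
    (∃ φ : AdjoinRoot f ≃+* PowerSeries R,
        φ (AdjoinRoot.root f) = PowerSeries.X ∧
        φ (AdjoinRoot.of f PowerSeries.X) = PowerSeries.X ^ e + PowerSeries.C b ∧
        ∀ r : R, φ (AdjoinRoot.of f (PowerSeries.C r)) = PowerSeries.C r) ∧
      Module.finrank (PowerSeries R) (AdjoinRoot f) = e ∧
      Algebra.norm (PowerSeries R) (AdjoinRoot.root f) =
        (-1) ^ (e + 1) * (PowerSeries.X - PowerSeries.C b) := by
  subst hf
  have he₀ : e ≠ 0 := by omega
  have hsubst := PowerSeries.hasSubst_X_pow_add_C he₀ hb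
  set g : PowerSeries R →+* PowerSeries R := (PowerSeries.substAlgHom (R := R) hsubst).toRingHom
  have hgX : g PowerSeries.X = PowerSeries.X ^ e + PowerSeries.C b :=
    PowerSeries.substAlgHom_X hsubst
  have hgC (r : R) : g (PowerSeries.C r) = PowerSeries.C r :=
    (PowerSeries.substAlgHom hsubst).commutes r
  have hmonic : (X ^ e + C (PowerSeries.C b - PowerSeries.X)).Monic := monic_X_pow_add_C _ he₀
  have hdeg : (X ^ e + C (PowerSeries.C b - PowerSeries.X)).natDegree = e :=
    natDegree_X_pow_add_C
  have hroot : (X ^ e + C (PowerSeries.C b - PowerSeries.X)).eval₂ g PowerSeries.X = 0 := by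
    rw [eval₂_add, eval₂_X_pow, eval₂_C, map_sub, hgC, hgX]
    ring
  have hbij := AdjoinRoot.lift_bijective_of_sum_bijective hmonic hdeg g _ hroot
    (by simpa [g, PowerSeries.coe_substAlgHom] using
      PowerSeries.sum_subst_X_pow_add_C_mul_X_pow_bijective he₀ hb)
  refine ⟨⟨RingEquiv.ofBijective _ hbij, AdjoinRoot.lift_root hroot, ?_, fun r => ?_⟩, ?_, ?_⟩
  · rw [RingEquiv.ofBijective_apply, AdjoinRoot.lift_of, hgX]
  · rw [RingEquiv.ofBijective_apply, AdjoinRoot.lift_of, hgC]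
  · rw [(AdjoinRoot.powerBasis' hmonic).finrank, AdjoinRoot.powerBasis'_dim, hdeg]
  · rw [AdjoinRoot.norm_root_of_monic hmonic, hdeg, coeff_add, coeff_X_pow, if_neg he₀.symm,
      coeff_C_zero, zero_add]
    ring
end
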